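/- Let ζ = e^{2πi/6}, let G₁ = G(2,1,2) be the subgroup of GL(2,ℂ) generated by [[0,1],[1,0]], [[0,−1],[−1,0]] and [[−1,0],[0,1]], and let G₄ = G(6,1,2) be the subgroup of GL(2,ℂ) generated by u = [[0,1],[1,0]], s = [[0,ζ],[ζ⁻¹,0]] and t = [[ζ,0],[0,1]]. Then G₁ is a subgroup of G₄, and the elements of order 2 of G₄ are exactly the elements of order 2 of G₁ together with s, usu = [[0,ζ⁻¹],[ζ,0]], sus = [[0,ζ²],[ζ⁻²,0]] and ususu = [[0,ζ⁻²],[ζ²,0]]. -/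

import Mathlib

/-!
`G(m,1,2)`, generated by `u`, `s = [[0,θ],[θ⁻¹,0]]` and `t = diag(θ,1)`, is the group of
monomial `2 × 2` matrices with entries in `⟨θ⟩`: products of powers of `t` and of their
conjugates by `u` give every diagonal one, and multiplying these by `u` every antidiagonal one.
A monomial matrix squares to `1` exactly when it is `diag(±1, ±1)` or `[[0,a],[a⁻¹,0]]`.
For `θ = ζ` write `a = ζᵏ` with `-2 ≤ k ≤ 3`: `k = 0, 3` give `±u ∈ G(2,1,2)`, and
`k = 1, -1, 2, -2` give `s`, `usu`, `sus`, `ususu`. The diagonal involutions lie in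
`G(2,1,2)`, which sits in `G(6,1,2)` because `ζ³ = -1`.
-/

open Matrix

noncomputable section

/-- `ζ = e^{2πi/6}`. -/
def zeta : ℂ := Complex.exp (2 * (Real.pi : ℂ) * Complex.I / 6)

namespace Matrix.GeneralLinearGroup

section Semiring

variable {R : Type*} [Semiring R]

def diagHom : Rˣ × Rˣ →* GL (Fin 2) R where
  toFun p := ⟨!![(p.1 : R), 0; 0, p.2], !![(↑p.1⁻¹ : R), 0; 0, ↑p.2⁻¹],
    by simp [one_fin_two], by simp [one_fin_two]⟩
  map_one' := by ext i j; fin_cases i <;> fin_cases j <;> simp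
  map_mul' p q := by ext i j; fin_cases i <;> fin_cases j <;> simp

def antidiag (a b : Rˣ) : GL (Fin 2) R :=
  ⟨!![0, (a : R); b, 0], !![0, (↑b⁻¹ : R); ↑a⁻¹, 0],
    by simp [one_fin_two], by simp [one_fin_two]⟩

@[simp]
lemma val_diagHom (p : Rˣ × Rˣ) :
    (diagHom p : Matrix (Fin 2) (Fin 2) R) = !![(p.1 : R), 0; 0, p.2] :=
  rfl

@[simp]
lemma val_antidiag (a b : Rˣ) :
    (antidiag a b : Matrix (Fin 2) (Fin 2) R) = !![0, (a : R); b, 0] :=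
  rfl

@[simp]
lemma diagHom_mul_antidiag (p : Rˣ × Rˣ) (a b : Rˣ) :
    diagHom p * antidiag a b = antidiag (p.1 * a) (p.2 * b) := by
  ext i j; fin_cases i <;> fin_cases j <;> simp

@[simp]
lemma antidiag_mul_diagHom (a b : Rˣ) (p : Rˣ × Rˣ) :
    antidiag a b * diagHom p = antidiag (a * p.2) (b * p.1) := by
  ext i j; fin_cases i <;> fin_cases j <;> simp

@[simp]
lemma antidiag_mul_antidiag (a b c d : Rˣ) :
    antidiag a b * antidiag c d = diagHom (a * d, b * c) := by
  ext i j; fin_cases i <;> fin_cases j <;> simp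

@[simp]
lemma diagHom_one_one : diagHom (1, 1) = (1 : GL (Fin 2) R) :=
  map_one diagHom

@[simp]
lemma diagHom_mul_diagHom (p q : Rˣ × Rˣ) : diagHom p * diagHom q = diagHom (p * q) :=
  (map_mul diagHom p q).symm

@[simp]
lemma antidiag_inv (a b : Rˣ) : (antidiag a b)⁻¹ = antidiag b⁻¹ a⁻¹ :=
  inv_eq_of_mul_eq_one_right (by simp)

lemma diagHom_injective : Function.Injective (diagHom : Rˣ × Rˣ →* GL (Fin 2) R) := by
  intro p q h
  simpa [Units.ext_iff, Prod.ext_iff] using h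

lemma antidiag_ne_diagHom [Nontrivial R] (a b : Rˣ) (p : Rˣ × Rˣ) : antidiag a b ≠ diagHom p := by
  simp [Units.ext_iff, eq_comm]

@[simp]
lemma antidiag_ne_one [Nontrivial R] (a b : Rˣ) : antidiag a b ≠ 1 :=
  diagHom_one_one (R := R) ▸ antidiag_ne_diagHom a b (1, 1)

def monomialSubgroup (μ : Subgroup Rˣ) : Subgroup (GL (Fin 2) R) where
  carrier := {x | ∃ a ∈ μ, ∃ b ∈ μ, x = diagHom (a, b) ∨ x = antidiag a b}
  one_mem' := ⟨1, μ.one_mem, 1, μ.one_mem, Or.inl diagHom_one_one.symm⟩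
  mul_mem' := by
    rintro _ _ ⟨a, ha, b, hb, rfl | rfl⟩ ⟨c, hc, d, hd, rfl | rfl⟩
    · exact ⟨a * c, μ.mul_mem ha hc, b * d, μ.mul_mem hb hd, Or.inl (diagHom_mul_diagHom _ _)⟩
    · exact ⟨a * c, μ.mul_mem ha hc, b * d, μ.mul_mem hb hd, Or.inr (diagHom_mul_antidiag _ _ _)⟩
    · exact ⟨a * d, μ.mul_mem ha hd, b * c, μ.mul_mem hb hc, Or.inr (antidiag_mul_diagHom _ _ _)⟩
    · exact ⟨a * d, μ.mul_mem ha hd, b * c, μ.mul_mem hb hc, Or.inl (antidiag_mul_antidiag _ _ _ _)⟩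
  inv_mem' := by
    rintro _ ⟨a, ha, b, hb, rfl | rfl⟩
    · exact ⟨a⁻¹, μ.inv_mem ha, b⁻¹, μ.inv_mem hb, Or.inl (map_inv diagHom _)⟩
    · exact ⟨b⁻¹, μ.inv_mem hb, a⁻¹, μ.inv_mem ha, Or.inr (antidiag_inv a b)⟩

lemma mem_monomialSubgroup {μ : Subgroup Rˣ} {x : GL (Fin 2) R} :
    x ∈ monomialSubgroup μ ↔ ∃ a ∈ μ, ∃ b ∈ μ, x = diagHom (a, b) ∨ x = antidiag a b :=
  Iff.rfl

lemma monomialSubgroup_mono {μ ν : Subgroup Rˣ} (h : μ ≤ ν) :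
    monomialSubgroup μ ≤ monomialSubgroup ν := by
  simp_rw [SetLike.le_def, mem_monomialSubgroup]
  rintro _ ⟨a, ha, b, hb, hx⟩
  exact ⟨a, h ha, b, h hb, hx⟩

lemma antidiag_mem_monomialSubgroup {μ : Subgroup Rˣ} {a b : Rˣ} (ha : a ∈ μ) (hb : b ∈ μ) :
    antidiag a b ∈ monomialSubgroup μ :=
  mem_monomialSubgroup.2 ⟨a, ha, b, hb, Or.inr rfl⟩

/-- `G(m, 1, 2)` when `θ` is a primitive `m`-th root of unity. -/
def imprimitiveGroup (θ : Rˣ) : Subgroup (GL (Fin 2) R) :=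
  Subgroup.closure {antidiag 1 1, antidiag θ θ⁻¹, diagHom (θ, 1)}

lemma imprimitiveGroup_eq_monomialSubgroup (θ : Rˣ) :
    imprimitiveGroup θ = monomialSubgroup (Subgroup.zpowers θ) := by
  apply le_antisymm
  · rw [imprimitiveGroup, Subgroup.closure_le]
    rintro _ (rfl | rfl | rfl)
    · exact antidiag_mem_monomialSubgroup (one_mem _) (one_mem _)
    · exact antidiag_mem_monomialSubgroup (Subgroup.mem_zpowers θ)
        (inv_mem (Subgroup.mem_zpowers θ))
    · exact mem_monomialSubgroup.2 ⟨θ, Subgroup.mem_zpowers θ, 1, one_mem _, Or.inl rfl⟩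
  · have hu : antidiag 1 1 ∈ imprimitiveGroup θ := Subgroup.subset_closure (by simp)
    have ht : diagHom (θ, 1) ∈ imprimitiveGroup θ := Subgroup.subset_closure (by simp)
    have hdiag (i j : ℤ) : diagHom (θ ^ i, θ ^ j) ∈ imprimitiveGroup θ := by
      have : diagHom (θ ^ i, θ ^ j) =
          diagHom (θ, 1) ^ i * (antidiag 1 1 * diagHom (θ, 1) ^ j * antidiag 1 1) := by
        simp [← map_zpow]
      rw [this]
      exact mul_mem (zpow_mem ht i) (mul_mem (mul_mem hu (zpow_mem ht j)) hu)
    intro x hx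
    obtain ⟨_, ⟨i, rfl⟩, _, ⟨j, rfl⟩, rfl | rfl⟩ := mem_monomialSubgroup.1 hx
    · exact hdiag i j
    · simpa using mul_mem (hdiag i j) hu

end Semiring

section Ring

variable {R : Type*} [Ring R] [NoZeroDivisors R]

lemma _root_.Units.mem_zpowers_neg_one_of_mul_self_eq_one {a : Rˣ} (ha : a * a = 1) :
    a ∈ Subgroup.zpowers (-1) := by
  rcases mul_self_eq_one_iff.1 (congrArg Units.val ha) with ha | ha
  · rw [Units.val_eq_one.1 ha]
    exact one_mem _
  · rw [(Units.ext (by simpa using ha) : a = -1)]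
    exact Subgroup.mem_zpowers _

lemma eq_antidiag_or_mem_monomialSubgroup_neg_one {μ : Subgroup Rˣ} {M : GL (Fin 2) R}
    (hM : M ∈ monomialSubgroup μ) (h : M * M = 1) :
    M ∈ monomialSubgroup (Subgroup.zpowers (-1)) ∨ ∃ a ∈ μ, M = antidiag a a⁻¹ := by
  obtain ⟨a, ha, b, hb, rfl | rfl⟩ := mem_monomialSubgroup.1 hM
  · rw [diagHom_mul_diagHom, ← diagHom_one_one, diagHom_injective.eq_iff, Prod.mk_mul_mk,
      Prod.mk.injEq] at h
    exact Or.inl (mem_monomialSubgroup.2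
      ⟨a, Units.mem_zpowers_neg_one_of_mul_self_eq_one h.1, b,
        Units.mem_zpowers_neg_one_of_mul_self_eq_one h.2, Or.inl rfl⟩)
  · rw [antidiag_mul_antidiag, ← diagHom_one_one, diagHom_injective.eq_iff, Prod.mk.injEq] at h
    exact Or.inr ⟨a, ha, by rw [eq_inv_of_mul_eq_one_right h.1]⟩

end Ring

end Matrix.GeneralLinearGroup

lemma exists_zpow_eq_of_pow_eq_one {G : Type*} [Group G] {g : G} {n : ℕ} (hg : g ^ n = 1)
    (hn : 0 < n) (c k : ℤ) : ∃ j, c ≤ j ∧ j < c + n ∧ g ^ k = g ^ j := by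
  refine ⟨c + (k - c) % n, by have := Int.emod_nonneg (k - c) (by omega : (n : ℤ) ≠ 0); omega,
    by have := Int.emod_lt_of_pos (k - c) (by omega : (0 : ℤ) < n); omega, ?_⟩
  rw [_root_.zpow_add, ← zpow_eq_zpow_emod' _ hg, ← _root_.zpow_add, add_sub_cancel]

def zetaUnit : ℂˣ := Units.mk0 zeta (Complex.exp_ne_zero _)

@[simp]
lemma val_zetaUnit : (zetaUnit : ℂ) = zeta := rfl

lemma isPrimitiveRoot_zeta : IsPrimitiveRoot zeta 6 := by
  simpa [zeta] using Complex.isPrimitiveRoot_exp 6 (by norm_num)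

lemma zetaUnit_pow_six : zetaUnit ^ 6 = 1 :=
  Units.ext (by simpa using isPrimitiveRoot_zeta.pow_eq_one)

lemma zetaUnit_pow_three : zetaUnit ^ 3 = -1 :=
  Units.ext (by simpa using
    (isPrimitiveRoot_zeta.pow_of_dvd three_ne_zero (by norm_num)).eq_neg_one_of_two_right)

open GeneralLinearGroup

local notation "𝐮" => antidiag (1 : ℂˣ) 1
local notation "𝐬" => antidiag zetaUnit zetaUnit⁻¹

lemma monomialSubgroup_zpowers_neg_one_le :
    monomialSubgroup (Subgroup.zpowers (-1 : ℂˣ)) ≤ monomialSubgroup (Subgroup.zpowers zetaUnit) :=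
  monomialSubgroup_mono (Subgroup.zpowers_le.2 ⟨3, by simp [zetaUnit_pow_three]⟩)

lemma mem_monomialSubgroup_neg_one_or_eq_of_mul_self_eq_one {M : GL (Fin 2) ℂ}
    (hM : M ∈ monomialSubgroup (Subgroup.zpowers zetaUnit)) (h : M * M = 1) :
    M ∈ monomialSubgroup (Subgroup.zpowers (-1)) ∨
      M = 𝐬 ∨ M = 𝐮 * 𝐬 * 𝐮 ∨ M = 𝐬 * 𝐮 * 𝐬 ∨ M = 𝐮 * 𝐬 * 𝐮 * 𝐬 * 𝐮 := by
  obtain hM | ⟨a, ha, rfl⟩ := eq_antidiag_or_mem_monomialSubgroup_neg_one hM h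
  · exact Or.inl hM
  obtain ⟨k, rfl⟩ := Subgroup.mem_zpowers_iff.1 ha
  obtain ⟨j, hj₁, hj₂, hkj⟩ := exists_zpow_eq_of_pow_eq_one zetaUnit_pow_six (by norm_num) (-2) k
  rw [hkj]
  -- `j = -2, -1, 0, 1, 2, 3` give `ususu`, `usu`, `u`, `s`, `sus`, `-u`
  interval_cases j
  · simp [pow_two]
  · simp
  · simp [antidiag_mem_monomialSubgroup]
  · simp
  · simp [pow_two]
  · left
    rw [zpow_ofNat, zetaUnit_pow_three]
    exact antidiag_mem_monomialSubgroup (Subgroup.mem_zpowers _) (inv_mem (Subgroup.mem_zpowers _))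

lemma involutive_mem_monomialSubgroup_zpowers_zetaUnit_iff (M : GL (Fin 2) ℂ) :
    (M ∈ monomialSubgroup (Subgroup.zpowers zetaUnit) ∧ M * M = 1 ∧ M ≠ 1) ↔
      (M ∈ monomialSubgroup (Subgroup.zpowers (-1)) ∧ M * M = 1 ∧ M ≠ 1) ∨
        M = 𝐬 ∨ M = 𝐮 * 𝐬 * 𝐮 ∨ M = 𝐬 * 𝐮 * 𝐬 ∨ M = 𝐮 * 𝐬 * 𝐮 * 𝐬 * 𝐮 := by
  have hu : 𝐮 ∈ monomialSubgroup (Subgroup.zpowers zetaUnit) :=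
    antidiag_mem_monomialSubgroup (one_mem _) (one_mem _)
  have hs : 𝐬 ∈ monomialSubgroup (Subgroup.zpowers zetaUnit) :=
    antidiag_mem_monomialSubgroup (Subgroup.mem_zpowers _) (inv_mem (Subgroup.mem_zpowers _))
  constructor
  · rintro ⟨hM, h2, h1⟩
    exact (mem_monomialSubgroup_neg_one_or_eq_of_mul_self_eq_one hM h2).imp_left
      fun hM => ⟨hM, h2, h1⟩
  · rintro (⟨hM, h2, h1⟩ | rfl | rfl | rfl | rfl)
    · exact ⟨monomialSubgroup_zpowers_neg_one_le hM, h2, h1⟩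
    · exact ⟨hs, by simp, by simp⟩
    · exact ⟨mul_mem (mul_mem hu hs) hu, by simp, by simp⟩
    · exact ⟨mul_mem (mul_mem hs hu) hs, by simp, by simp⟩
    · exact ⟨mul_mem (mul_mem (mul_mem (mul_mem hu hs) hu) hs) hu, by simp, by simp⟩

theorem stmt12
    (u s t : Matrix (Fin 2) (Fin 2) ℂ)
    (hu : u = !![0, 1; 1, 0])
    (hs : s = !![0, zeta; zeta⁻¹, 0])
    (ht : t = !![zeta, 0; 0, 1])
    (G₁ G₄ : Subgroup (GL (Fin 2) ℂ))
    (hG₁ : G₁ = Subgroup.closure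
      {x : GL (Fin 2) ℂ | (x : Matrix (Fin 2) (Fin 2) ℂ) = !![0, 1; 1, 0] ∨
        (x : Matrix (Fin 2) (Fin 2) ℂ) = !![0, -1; -1, 0] ∨
        (x : Matrix (Fin 2) (Fin 2) ℂ) = !![-1, 0; 0, 1]})
    (hG₄ : G₄ = Subgroup.closure
      {x : GL (Fin 2) ℂ | (x : Matrix (Fin 2) (Fin 2) ℂ) = u ∨
        (x : Matrix (Fin 2) (Fin 2) ℂ) = s ∨ (x : Matrix (Fin 2) (Fin 2) ℂ) = t}) :
    G₁ ≤ G₄ ∧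
    u * s * u = !![0, zeta⁻¹; zeta, 0] ∧
    s * u * s = !![0, zeta ^ 2; zeta ^ (-2 : ℤ), 0] ∧
    u * s * u * s * u = !![0, zeta ^ (-2 : ℤ); zeta ^ 2, 0] ∧
    (∀ M : GL (Fin 2) ℂ,
      (M ∈ G₄ ∧ (M : Matrix (Fin 2) (Fin 2) ℂ) * (M : Matrix (Fin 2) (Fin 2) ℂ) = 1 ∧
        (M : Matrix (Fin 2) (Fin 2) ℂ) ≠ 1)
      ↔ ((M ∈ G₁ ∧ (M : Matrix (Fin 2) (Fin 2) ℂ) * (M : Matrix (Fin 2) (Fin 2) ℂ) = 1 ∧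
          (M : Matrix (Fin 2) (Fin 2) ℂ) ≠ 1) ∨
        (M : Matrix (Fin 2) (Fin 2) ℂ) = s ∨
        (M : Matrix (Fin 2) (Fin 2) ℂ) = u * s * u ∨
        (M : Matrix (Fin 2) (Fin 2) ℂ) = s * u * s ∨
        (M : Matrix (Fin 2) (Fin 2) ℂ) = u * s * u * s * u)) := by
  obtain rfl : G₁ = monomialSubgroup (Subgroup.zpowers (-1)) := by
    rw [hG₁, ← imprimitiveGroup_eq_monomialSubgroup, imprimitiveGroup]
    congr 1; ext x; simp [Units.ext_iff]
  obtain rfl : G₄ = monomialSubgroup (Subgroup.zpowers zetaUnit) := by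
    rw [hG₄, ← imprimitiveGroup_eq_monomialSubgroup, imprimitiveGroup]
    congr 1; ext x; simp [Units.ext_iff, hu, hs, ht]
  obtain rfl : u = 𝐮 := by simp [hu]
  obtain rfl : s = 𝐬 := by simp [hs]
  refine ⟨monomialSubgroup_zpowers_neg_one_le, by simp, by simp [sq], by simp [sq], fun M => ?_⟩
  simpa only [← Units.val_mul, Units.val_inj, ne_eq, Units.val_eq_one] using
    involutive_mem_monomialSubgroup_zpowers_zetaUnit_iff M
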